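/- arXiv:1412.3227 — 3 statements merged into one kernel-verified Lean document; each statement's English description precedes it below -/
import Mathlib

section
/- Let K be a compact Hausdorff topological space and let f be a non-zero element of the Banach space C(K, ℂ) of continuous complex-valued functions on K with the supremum norm. Then the one-dimensional subspace ℂf is a Chebyshev subspace of C(K, ℂ) if and only if f(t) ≠ 0 for every t ∈ K (i.e., f is invertible in the algebra C(K, ℂ)). -/
/-!
Best approximations from the line `ℂ f` exist because `c ↦ ‖g - c • f‖` is coercive. If `v₁`, `v₂`
are two of them, at distance `d` from `g`, their midpoint is one too, so `(g - v₁) + (g - v₂)` has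
norm `2 d`. At a point `t` where this sum peaks, strict convexity of the scalars forces
`(g - v₁) t = (g - v₂) t`; when `f t ≠ 0` this pins down the coefficient, so `v₁ = v₂`.

Conversely, if `f t₀ = 0`, then `g = 1 - |f| / ‖f‖` satisfies `g t₀ = 1`, so every multiple of `f`
is at distance at least `1` from `g`, while every `s • f` with `0 ≤ s ≤ ‖f‖⁻¹` is within `1`
of `g`: the best approximation is not unique.
-/

open Submodule

section BestApprox

variable {X : Type*} [SeminormedAddCommGroup X]

def IsBestApprox (V : Set X) (g v : X) : Prop :=
  v ∈ V ∧ ∀ w ∈ V, ‖g - v‖ ≤ ‖g - w‖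

theorem exists_isBestApprox_span_singleton (𝕜 : Type*) [NormedField 𝕜] [ProperSpace 𝕜]
    [NormedSpace 𝕜 X] (f g : X) : ∃ v, IsBestApprox (span 𝕜 {f}) g v := by
  have hcoercive : ∀ᶠ c : 𝕜 in Filter.cocompact 𝕜, ‖g - (0 : 𝕜) • f‖ ≤ ‖g - c • f‖ := by
    filter_upwards [tendsto_norm_cocompact_atTop.eventually_ge_atTop (2 * ‖g‖ / ‖f‖)] with c hc
    have hcf : ‖c • f‖ = ‖c‖ * ‖f‖ := norm_smul c f
    rcases (norm_nonneg f).eq_or_lt with hf | hf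
    · simpa [hcf, ← hf] using norm_sub_norm_le g (c • f)
    · have hlarge : 2 * ‖g‖ ≤ ‖c • f‖ := hcf ▸ (div_le_iff₀ hf).mp hc
      have hrev : ‖c • f‖ - ‖g‖ ≤ ‖g - c • f‖ := norm_sub_rev (c • f) g ▸ norm_sub_norm_le _ _
      rw [zero_smul, sub_zero]
      linarith
  obtain ⟨c, hc⟩ :=
    (by fun_prop : Continuous fun c : 𝕜 => ‖g - c • f‖).exists_forall_le' 0 hcoercive
  refine ⟨c • f, smul_mem _ c (mem_span_singleton_self f), fun w hw => ?_⟩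
  obtain ⟨c', rfl⟩ := mem_span_singleton.mp hw
  exact hc c'

theorem IsBestApprox.two_mul_norm_le_norm_add {𝕜 : Type*} [RCLike 𝕜] [NormedSpace 𝕜 X]
    {V : Submodule 𝕜 X} {g v₁ v₂ : X} (h₁ : IsBestApprox V g v₁) (h₂ : IsBestApprox V g v₂) :
    2 * ‖g - v₁‖ ≤ ‖(g - v₁) + (g - v₂)‖ := by
  have hmid : (2⁻¹ : 𝕜) • (v₁ + v₂) ∈ V := V.smul_mem _ (V.add_mem h₁.1 h₂.1)
  have hsum : (g - v₁) + (g - v₂) = (2 : 𝕜) • (g - (2⁻¹ : 𝕜) • (v₁ + v₂)) := by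
    rw [smul_sub, smul_inv_smul₀ two_ne_zero, two_smul]
    abel
  rw [hsum, norm_smul, RCLike.norm_two]
  gcongr
  exact h₁.2 _ hmid

end BestApprox

namespace ContinuousMap

variable {K : Type*} [TopologicalSpace K] [CompactSpace K]

theorem exists_norm_apply_eq_norm [Nonempty K] {E : Type*} [SeminormedAddCommGroup E]
    (u : C(K, E)) : ∃ t, ‖u t‖ = ‖u‖ := by
  obtain ⟨t, -, ht⟩ := isCompact_univ.exists_isMaxOn Set.univ_nonempty
    (map_continuous u).norm.continuousOn
  exact ⟨t, (u.norm_coe_le_norm t).antisymm ((u.norm_le (norm_nonneg _)).mpr fun _ => ht trivial)⟩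

theorem exists_apply_eq_of_two_mul_le_norm_add [Nonempty K] {E : Type*} [NormedAddCommGroup E]
    [NormedSpace ℝ E] [StrictConvexSpace ℝ E] {u v : C(K, E)} {r : ℝ} (hu : ‖u‖ ≤ r)
    (hv : ‖v‖ ≤ r) (huv : 2 * r ≤ ‖u + v‖) : ∃ t, u t = v t := by
  obtain ⟨t, ht⟩ := exists_norm_apply_eq_norm (u + v)
  have hut := (u.norm_coe_le_norm t).trans hu
  have hvt := (v.norm_coe_le_norm t).trans hv
  have hsum : ‖u t + v t‖ ≤ ‖u t‖ + ‖v t‖ := norm_add_le _ _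
  rw [← add_apply, ht] at hsum
  refine ⟨t, eq_of_norm_eq_of_norm_add_eq (by linarith) ?_⟩
  rw [← add_apply, ht]
  linarith

variable {𝕜 : Type*} [RCLike 𝕜]

theorem isBestApprox_span_singleton_unique {f : C(K, 𝕜)} (hf : ∀ t, f t ≠ 0) {g v₁ v₂ : C(K, 𝕜)}
    (h₁ : IsBestApprox (span 𝕜 {f}) g v₁) (h₂ : IsBestApprox (span 𝕜 {f}) g v₂) : v₁ = v₂ := by
  cases isEmpty_or_nonempty K
  · exact ext isEmptyElim
  obtain ⟨c₁, rfl⟩ := mem_span_singleton.mp h₁.1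
  obtain ⟨c₂, rfl⟩ := mem_span_singleton.mp h₂.1
  obtain ⟨t, ht⟩ := exists_apply_eq_of_two_mul_le_norm_add le_rfl (h₂.2 _ h₁.1)
    (h₁.two_mul_norm_le_norm_add h₂)
  simp only [sub_apply, smul_apply, smul_eq_mul, sub_right_inj] at ht
  rw [mul_right_cancel₀ (hf t) ht]

noncomputable def oneSubNormDivNorm (f : C(K, 𝕜)) : C(K, 𝕜) :=
  ⟨fun t => ((1 - ‖f t‖ / ‖f‖ : ℝ) : 𝕜), by fun_prop⟩

theorem isBestApprox_oneSubNormDivNorm {f : C(K, 𝕜)} {t₀ : K} (ht₀ : f t₀ = 0) {s : ℝ}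
    (hs₀ : 0 ≤ s) (hs : s ≤ ‖f‖⁻¹) :
    IsBestApprox (span 𝕜 {f}) (oneSubNormDivNorm f) ((s : 𝕜) • f) := by
  refine ⟨smul_mem _ _ (mem_span_singleton_self f), fun w hw => ?_⟩
  obtain ⟨c, rfl⟩ := mem_span_singleton.mp hw
  refine le_trans ?_ (((oneSubNormDivNorm f) - c • f).norm_coe_le_norm t₀)
  refine ((norm_le _ zero_le_one).mpr fun t => ?_).trans (by simp [oneSubNormDivNorm, ht₀])
  have hratio : ‖f t‖ / ‖f‖ ≤ 1 := div_le_one_of_le₀ (f.norm_coe_le_norm t) (norm_nonneg f)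
  have hst : s * ‖f t‖ ≤ ‖f t‖ / ‖f‖ := by
    rw [div_eq_inv_mul]; exact mul_le_mul_of_nonneg_right hs (norm_nonneg _)
  calc ‖(oneSubNormDivNorm f - (s : 𝕜) • f) t‖
      ≤ ‖((1 - ‖f t‖ / ‖f‖ : ℝ) : 𝕜)‖ + ‖(s : 𝕜) • f t‖ := norm_sub_le _ _
    _ = (1 - ‖f t‖ / ‖f‖) + s * ‖f t‖ := by
      rw [RCLike.norm_ofReal, norm_smul, RCLike.norm_ofReal, abs_of_nonneg hs₀,
        abs_of_nonneg (sub_nonneg.mpr hratio)]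
    _ ≤ 1 := by linarith

end ContinuousMap

theorem span_singleton_chebyshev_iff_invertible_CK_general
    {K : Type*} [TopologicalSpace K] [CompactSpace K]
    (f : C(K, ℂ)) (hf : f ≠ 0) :
    (∀ g : C(K, ℂ), ∃! v : C(K, ℂ), v ∈ Submodule.span ℂ ({f} : Set C(K, ℂ)) ∧
        ∀ w ∈ Submodule.span ℂ ({f} : Set C(K, ℂ)), ‖g - v‖ ≤ ‖g - w‖) ↔
    (∀ t : K, f t ≠ 0) := by
  constructor
  · intro hcheb t₀ ht₀
    have hinv_nonneg : 0 ≤ ‖f‖⁻¹ := inv_nonneg.mpr (norm_nonneg f)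
    have hsmul : ((0 : ℝ) : ℂ) • f = ((‖f‖⁻¹ : ℝ) : ℂ) • f :=
      (hcheb (ContinuousMap.oneSubNormDivNorm f)).unique
        (ContinuousMap.isBestApprox_oneSubNormDivNorm ht₀ le_rfl hinv_nonneg)
        (ContinuousMap.isBestApprox_oneSubNormDivNorm ht₀ hinv_nonneg le_rfl)
    have hinv : (0 : ℝ) = ‖f‖⁻¹ := by exact_mod_cast smul_left_injective ℂ hf hsmul
    exact hf (norm_eq_zero.mp (inv_eq_zero.mp hinv.symm))
  · intro hf' g
    obtain ⟨v, hv⟩ := exists_isBestApprox_span_singleton ℂ f g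
    exact ⟨v, hv, fun w hw => ContinuousMap.isBestApprox_span_singleton_unique hf' hw hv⟩

/-- A non-zero `f ∈ C(K, ℂ)` spans a Chebyshev subspace of `C(K, ℂ)` iff `f` vanishes
nowhere, i.e. `f` is invertible in the algebra `C(K, ℂ)`. -/
theorem span_singleton_chebyshev_iff_invertible_CK
    {K : Type*} [TopologicalSpace K] [CompactSpace K] [T2Space K]
    (f : C(K, ℂ)) (hf : f ≠ 0) :
    (∀ g : C(K, ℂ), ∃! v : C(K, ℂ), v ∈ Submodule.span ℂ ({f} : Set C(K, ℂ)) ∧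
        ∀ w ∈ Submodule.span ℂ ({f} : Set C(K, ℂ)), ‖g - v‖ ≤ ‖g - w‖) ↔
    (∀ t : K, f t ≠ 0) :=
  span_singleton_chebyshev_iff_invertible_CK_general f hf
end

section
/- Let E be a complex Hilbert space, let J : E → E be a conjugation (a conjugate-linear map with J(J(x)) = x and ⟨Jx, Jy⟩ = ⟨y, x⟩ for all x, y ∈ E), and define the spin norm N(x) = (‖x‖² + √(‖x‖⁴ − |⟨x, Jx⟩|²))^{1/2}. Let K be a closed linear subspace of E with J(K) ⊆ K, and let P denote the orthogonal projection of E onto K. Then for every x ∈ E, P(x) is the unique element k₀ ∈ K satisfying N(x − k₀) ≤ N(x − k) for all k ∈ K; in particular, K is a Chebyshev subspace of E with respect to the spin norm. -/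
/-!
Write `x = w + p` with `p` the orthogonal projection of `x` onto `K` and `w ⊥ K`. For `m ∈ K`,
invariance of `K` under `J` together with the symmetry `⟪a, J b⟫ = ⟪b, J a⟫` kills the cross
terms of `⟪w + m, J (w + m)⟫`, so `‖⟪w + m, J (w + m)⟫‖ ≤ ‖⟪w, J w⟫‖ + ‖m‖²`; with
`‖w + m‖² = ‖w‖² + ‖m‖²` this makes the inner radicand grow, whence
`N(w)² + ‖m‖² ≤ N(w + m)²`. Taking `m = p - k` shows that `p` minimises `N (x - ·)` on `K`,
strictly unless `k = p`.
-/

open scoped ComplexInnerProductSpace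

section Projection

variable {𝕜 E : Type*} [RCLike 𝕜] [NormedAddCommGroup E] [InnerProductSpace 𝕜 E]

theorem Submodule.starProjection_isUniqueMin_of_sq_add_norm_sq_le
    (K : Submodule 𝕜 E) [K.HasOrthogonalProjection] {f : E → ℝ} (hf₀ : ∀ x, 0 ≤ f x)
    (hf : ∀ w ∈ Kᗮ, ∀ m ∈ K, f w ^ 2 + ‖m‖ ^ 2 ≤ f (w + m) ^ 2) (x : E) :
    (∀ k ∈ K, f (x - K.starProjection x) ≤ f (x - k)) ∧
      ∀ k₀ ∈ K, (∀ k ∈ K, f (x - k₀) ≤ f (x - k)) → k₀ = K.starProjection x := by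
  set p := K.starProjection x
  have hp : p ∈ K := K.starProjection_apply_mem x
  have hw : x - p ∈ Kᗮ := K.sub_starProjection_mem_orthogonal x
  have hsplit : ∀ k ∈ K, f (x - p) ^ 2 + ‖p - k‖ ^ 2 ≤ f (x - k) ^ 2 := fun k hk => by
    simpa using hf (x - p) hw (p - k) (K.sub_mem hp hk)
  refine ⟨fun k hk => ?_, fun k₀ hk₀ hmin => ?_⟩
  · exact (pow_le_pow_iff_left₀ (hf₀ _) (hf₀ _) two_ne_zero).mp
      ((le_add_of_nonneg_right (sq_nonneg _)).trans (hsplit k hk))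
  · have hle : f (x - k₀) ^ 2 ≤ f (x - p) ^ 2 := pow_le_pow_left₀ (hf₀ _) (hmin p hp) 2
    have hzero : ‖p - k₀‖ ^ 2 = 0 := le_antisymm (by linarith [hsplit k₀ hk₀]) (sq_nonneg _)
    exact (sub_eq_zero.mp (norm_eq_zero.mp (pow_eq_zero_iff two_ne_zero |>.mp hzero))).symm

end Projection

section Conjugation

variable {E : Type*} [NormedAddCommGroup E] [InnerProductSpace ℂ E] (J : E →ₗ⋆[ℂ] E)

noncomputable def spinNorm (x : E) : ℝ :=
  Real.sqrt (‖x‖ ^ 2 + Real.sqrt (‖x‖ ^ 4 - ‖⟪x, J x⟫‖ ^ 2))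

theorem spinNorm_nonneg (x : E) : 0 ≤ spinNorm J x := Real.sqrt_nonneg _

theorem spinNorm_sq (x : E) :
    spinNorm J x ^ 2 = ‖x‖ ^ 2 + Real.sqrt (‖x‖ ^ 4 - ‖⟪x, J x⟫‖ ^ 2) :=
  Real.sq_sqrt (by positivity)

variable {J}

theorem norm_map_of_inner_map_map (hJinner : ∀ x y : E, ⟪J x, J y⟫ = ⟪y, x⟫) (x : E) :
    ‖J x‖ = ‖x‖ := by
  rw [← sq_eq_sq₀ (norm_nonneg _) (norm_nonneg _), ← inner_self_eq_norm_sq (𝕜 := ℂ),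
    ← inner_self_eq_norm_sq (𝕜 := ℂ), hJinner]

theorem norm_inner_self_map_le (hJinner : ∀ x y : E, ⟪J x, J y⟫ = ⟪y, x⟫) (x : E) :
    ‖⟪x, J x⟫‖ ≤ ‖x‖ ^ 2 := by
  simpa [norm_map_of_inner_map_map hJinner, sq] using norm_inner_le_norm (𝕜 := ℂ) x (J x)

theorem inner_map_comm (hJinv : ∀ x : E, J (J x) = x)
    (hJinner : ∀ x y : E, ⟪J x, J y⟫ = ⟪y, x⟫) (x y : E) : ⟪x, J y⟫ = ⟪y, J x⟫ := by
  conv_lhs => rw [← hJinv x]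
  exact hJinner _ _

theorem inner_add_map_add_of_mem_orthogonal (hJinv : ∀ x : E, J (J x) = x)
    (hJinner : ∀ x y : E, ⟪J x, J y⟫ = ⟪y, x⟫) {K : Submodule ℂ E} (hJK : ∀ k ∈ K, J k ∈ K)
    {w m : E} (hw : w ∈ Kᗮ) (hm : m ∈ K) :
    ⟪w + m, J (w + m)⟫ = ⟪w, J w⟫ + ⟪m, J m⟫ := by
  have hwm : ⟪w, J m⟫ = 0 := K.inner_left_of_mem_orthogonal (hJK m hm) hw
  have hmw : ⟪m, J w⟫ = 0 := by rw [inner_map_comm hJinv hJinner, hwm]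
  rw [map_add, inner_add_left, inner_add_right, inner_add_right, hwm, hmw]
  ring

theorem spinNorm_sq_add_norm_sq_le (hJinv : ∀ x : E, J (J x) = x)
    (hJinner : ∀ x y : E, ⟪J x, J y⟫ = ⟪y, x⟫) {K : Submodule ℂ E} (hJK : ∀ k ∈ K, J k ∈ K)
    {w m : E} (hw : w ∈ Kᗮ) (hm : m ∈ K) :
    spinNorm J w ^ 2 + ‖m‖ ^ 2 ≤ spinNorm J (w + m) ^ 2 := by
  have hnorm : ‖w + m‖ ^ 2 = ‖w‖ ^ 2 + ‖m‖ ^ 2 := by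
    simpa [sq] using norm_add_sq_eq_norm_sq_add_norm_sq_of_inner_eq_zero w m
      (K.inner_left_of_mem_orthogonal hm hw)
  have hA := norm_inner_self_map_le hJinner w
  have hB := norm_inner_self_map_le hJinner m
  have hC : ‖⟪w + m, J (w + m)⟫‖ ≤ ‖⟪w, J w⟫‖ + ‖⟪m, J m⟫‖ := by
    rw [inner_add_map_add_of_mem_orthogonal hJinv hJinner hJK hw hm]
    exact norm_add_le _ _
  have hrad : ‖w‖ ^ 4 - ‖⟪w, J w⟫‖ ^ 2 ≤ ‖w + m‖ ^ 4 - ‖⟪w + m, J (w + m)⟫‖ ^ 2 := by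
    rw [show ‖w + m‖ ^ 4 = (‖w + m‖ ^ 2) ^ 2 by ring, hnorm]
    nlinarith [norm_nonneg ⟪w, J w⟫, norm_nonneg ⟪m, J m⟫, norm_nonneg ⟪w + m, J (w + m)⟫]
  rw [spinNorm_sq, spinNorm_sq, hnorm]
  linarith [Real.sqrt_le_sqrt hrad]

end Conjugation

theorem conjugation_invariant_subspace_chebyshev_spin_norm_general
    {E : Type*} [NormedAddCommGroup E] [InnerProductSpace ℂ E]
    (J : E →ₗ⋆[ℂ] E)
    (hJinv : ∀ x : E, J (J x) = x)
    (hJinner : ∀ x y : E, ⟪J x, J y⟫ = ⟪y, x⟫)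
    (N : E → ℝ)
    (hN : ∀ x : E, N x =
      Real.sqrt (‖x‖ ^ 2 + Real.sqrt (‖x‖ ^ 4 - ‖⟪x, J x⟫‖ ^ 2)))
    (K : Submodule ℂ E)
    [K.HasOrthogonalProjection]
    (hJK : ∀ k ∈ K, J k ∈ K) :
    ∀ x : E,
      (∀ k ∈ K, N (x - (K.orthogonalProjectionOnto x : E)) ≤ N (x - k)) ∧
      (∀ k₀ ∈ K, (∀ k ∈ K, N (x - k₀) ≤ N (x - k)) →
        k₀ = (K.orthogonalProjectionOnto x : E)) ∧
      (∃! v : E, v ∈ K ∧ ∀ k ∈ K, N (x - v) ≤ N (x - k)) := by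
  obtain rfl : N = spinNorm J := funext hN
  intro x
  obtain ⟨hmin, huniq⟩ := K.starProjection_isUniqueMin_of_sq_add_norm_sq_le (spinNorm_nonneg J)
    (fun w hw m hm => spinNorm_sq_add_norm_sq_le hJinv hJinner hJK hw hm) x
  exact ⟨hmin, huniq, ⟨_, ⟨K.starProjection_apply_mem x, hmin⟩, fun v hv => huniq v hv.1 hv.2⟩⟩

/-- Let `E` be a complex Hilbert space with a conjugation `J` and spin norm `N`, and let
`K` be a closed subspace with `J(K) ⊆ K`. Then for each `x ∈ E` the orthogonal projection
`P x` is the unique best approximation of `x` in `K` for the spin norm; in particular `K`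
is a Chebyshev subspace of `E` for the spin norm. -/
theorem conjugation_invariant_subspace_chebyshev_spin_norm
    {E : Type*} [NormedAddCommGroup E] [InnerProductSpace ℂ E] [CompleteSpace E]
    (J : E →ₗ⋆[ℂ] E)
    (hJinv : ∀ x : E, J (J x) = x)
    (hJinner : ∀ x y : E, ⟪J x, J y⟫ = ⟪y, x⟫)
    (N : E → ℝ)
    (hN : ∀ x : E, N x =
      Real.sqrt (‖x‖ ^ 2 + Real.sqrt (‖x‖ ^ 4 - ‖⟪x, J x⟫‖ ^ 2)))
    (K : Submodule ℂ E) (hKclosed : IsClosed (K : Set E))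
    [K.HasOrthogonalProjection]
    (hJK : ∀ k ∈ K, J k ∈ K) :
    ∀ x : E,
      (∀ k ∈ K, N (x - (K.orthogonalProjectionOnto x : E)) ≤ N (x - k)) ∧
      (∀ k₀ ∈ K, (∀ k ∈ K, N (x - k₀) ≤ N (x - k)) →
        k₀ = (K.orthogonalProjectionOnto x : E)) ∧
      (∃! v : E, v ∈ K ∧ ∀ k ∈ K, N (x - v) ≤ N (x - k)) :=
  conjugation_invariant_subspace_chebyshev_spin_norm_general J hJinv hJinner N hN K hJK
end

section
/- Let H be an infinite-dimensional separable complex Hilbert space and let K(H) denote the Banach space of compact linear operators on H with the operator norm. Then for every natural number n there exists an n-dimensional linear subspace V of K(H) which is a Chebyshev subspace of K(H): every compact operator T on H admits a unique S ∈ V with ‖T − S‖ ≤ ‖T − S'‖ for all S' ∈ V. -/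
open TopologicalSpace

/-!
Take an orthonormal sequence `e` and, using separability, a sequence `u` with summable norms
whose inner products separate points. The compact operators `W j x = ∑ₖ ⟪u k, x⟫ e (k + j)` satisfy
`⟪e i, (∑ⱼ cⱼ W j) x⟫ = [Xⁱ] (∑ⱼ cⱼ Xʲ) (∑ₖ ⟪u k, x⟫ Xᵏ)`, and power series over a field form a
domain, so every nonzero operator in `V = span {W 0, …, W (n - 1)}` is injective. This makes `V`
Chebyshev: if `S₁, S₂ ∈ V` are both nearest to `T`, the compact operator `(T - S₁) + (T - S₂)` has
norm `2 dist(T, V)` and attains it at some `x ≠ 0`; strict convexity of `H` forces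
`(T - S₁) x = (T - S₂) x`, so `S₁ - S₂ ∈ V` kills `x` and `S₁ = S₂`.
-/

open scoped InnerProductSpace
open PowerSeries

section

variable {𝕜 : Type*} [RCLike 𝕜] {H : Type*} [NormedAddCommGroup H] [InnerProductSpace 𝕜 H]

theorem eq_of_norm_le_of_norm_add_eq {E : Type*} [NormedAddCommGroup E] [NormedSpace ℝ E]
    [StrictConvexSpace ℝ E] {a b : E} {r : ℝ} (ha : ‖a‖ ≤ r) (hb : ‖b‖ ≤ r)
    (hab : ‖a + b‖ = 2 * r) : a = b := by
  have := norm_add_le a b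
  exact eq_of_norm_eq_of_norm_add_eq (by linarith) (by linarith)

theorem Submodule.exists_forall_norm_sub_le {X : Type*} [NormedAddCommGroup X] [NormedSpace 𝕜 X]
    (V : Submodule 𝕜 X) [FiniteDimensional 𝕜 V] (x : X) :
    ∃ v ∈ V, ∀ w ∈ V, ‖x - v‖ ≤ ‖x - w‖ := by
  have hlim : Filter.Tendsto (fun v : V => ‖x - v‖) (Filter.cocompact V) Filter.atTop := by
    refine Filter.tendsto_atTop_mono (fun v : V => ?_)
      (Filter.tendsto_atTop_add_const_right _ (-‖x‖) tendsto_norm_cocompact_atTop)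
    have := norm_sub_norm_le (v : X) x
    rw [norm_sub_rev] at this
    simp only [Submodule.coe_norm]
    linarith
  obtain ⟨v, hv⟩ := (continuous_const.sub continuous_subtype_val).norm.exists_forall_le hlim
  exact ⟨v, v.2, fun w hw => hv ⟨w, hw⟩⟩

theorem IsSelfAdjoint.exists_mem_spectrum_norm_eq [CompleteSpace H] {T : H →L[𝕜] H}
    (hT : IsSelfAdjoint T) (hT0 : T ≠ 0) : ∃ μ ∈ spectrum 𝕜 T, ‖μ‖ = ‖T‖ := by
  have hρ := ContinuousLinearMap.spectralRadius_eq_nnnorm T hT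
  have hne : (spectrum 𝕜 T).Nonempty := by
    by_contra h
    rw [Set.not_nonempty_iff_eq_empty] at h
    simp [spectralRadius, h] at hρ
    exact hT0 (nnnorm_eq_zero.1 hρ.symm)
  obtain ⟨μ, hμ, hμρ⟩ := spectrum.exists_nnnorm_eq_spectralRadius_of_nonempty hne
  rw [hρ, ENNReal.coe_inj] at hμρ
  exact ⟨μ, hμ, congrArg NNReal.toReal hμρ⟩

/-- An eigenvector of `M† M` for a spectral value of maximal modulus is a norming vector. -/
theorem IsCompactOperator.exists_norm_apply_eq_opNorm_mul [CompleteSpace H] [Nontrivial H]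
    {M : H →L[𝕜] H} (hM : IsCompactOperator M) : ∃ x ≠ 0, ‖M x‖ = ‖M‖ * ‖x‖ := by
  rcases eq_or_ne M 0 with rfl | hM0
  · obtain ⟨x, hx⟩ := exists_ne (0 : H)
    exact ⟨x, hx, by simp⟩
  have hTcpt : IsCompactOperator (star M * M) := hM.clm_comp (star M)
  obtain ⟨μ, hμ, hμT⟩ := (IsSelfAdjoint.star_mul_self M).exists_mem_spectrum_norm_eq
    (by simpa using hM0)
  have hμ0 : μ ≠ 0 := by
    rintro rfl
    rw [norm_zero, CStarRing.norm_star_mul_self, eq_comm, mul_self_eq_zero, norm_eq_zero] at hμT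
    exact hM0 hμT
  obtain ⟨v, hv⟩ := ((hTcpt.hasEigenvalue_iff_mem_spectrum hμ0).2 hμ).exists_hasEigenvector
  have hinner : ((‖M v‖ ^ 2 : ℝ) : 𝕜) = μ * ((‖v‖ ^ 2 : ℝ) : 𝕜) := by
    have hTv : (star M * M) v = μ • v := hv.apply_eq_smul
    push_cast
    rw [← inner_self_eq_norm_sq_to_K, ← inner_self_eq_norm_sq_to_K, ← M.adjoint_inner_right,
      ← ContinuousLinearMap.star_eq_adjoint, ← mul_apply_eq_comp, hTv, inner_smul_right]
  have hnorm := congrArg norm hinner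
  rw [norm_mul, RCLike.norm_ofReal, RCLike.norm_ofReal, hμT, CStarRing.norm_star_mul_self] at hnorm
  refine ⟨v, hv.2, ?_⟩
  rw [← sq_eq_sq₀ (norm_nonneg _) (by positivity), mul_pow]
  simpa [sq] using hnorm

section Chebyshev

variable [CompleteSpace H] {V : Submodule 𝕜 (H →L[𝕜] H)}

theorem eq_of_forall_norm_sub_le_of_injective (hV : V ≤ compactOperator (RingHom.id 𝕜) H H)
    (hinj : ∀ S ∈ V, ∀ x, S x = 0 → S = 0 ∨ x = 0) {T S₁ S₂ : H →L[𝕜] H}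
    (hT : IsCompactOperator T) (hS₁ : S₁ ∈ V) (hS₂ : S₂ ∈ V)
    (h₁ : ∀ S ∈ V, ‖T - S₁‖ ≤ ‖T - S‖) (h₂ : ∀ S ∈ V, ‖T - S₂‖ ≤ ‖T - S‖) : S₁ = S₂ := by
  rcases subsingleton_or_nontrivial H with _ | _
  · ext x
    exact Subsingleton.elim _ _
  let := InnerProductSpace.rclikeToReal 𝕜 H
  set d := ‖T - S₁‖
  have hd : ‖T - S₂‖ = d := le_antisymm (h₂ S₁ hS₁) (h₁ S₂ hS₂)
  set K := compactOperator (RingHom.id 𝕜) H H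
  have hA : (T - S₁) + (T - S₂) ∈ K :=
    K.add_mem (K.sub_mem (hT : T ∈ K) (hV hS₁)) (K.sub_mem hT (hV hS₂))
  have hAnorm : ‖(T - S₁) + (T - S₂)‖ = 2 * d := by
    refine le_antisymm ((norm_add_le _ _).trans_eq (by rw [hd]; ring)) ?_
    have hmid : (2⁻¹ : 𝕜) • (S₁ + S₂) ∈ V := V.smul_mem _ (V.add_mem hS₁ hS₂)
    calc 2 * d ≤ 2 * ‖T - (2⁻¹ : 𝕜) • (S₁ + S₂)‖ := by gcongr; exact h₁ _ hmid
      _ = ‖(2 : 𝕜) • (T - (2⁻¹ : 𝕜) • (S₁ + S₂))‖ := by rw [norm_smul, RCLike.norm_two]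
      _ = ‖(T - S₁) + (T - S₂)‖ := by congr 1; module
  obtain ⟨x, hx0, hx⟩ := IsCompactOperator.exists_norm_apply_eq_opNorm_mul hA
  have hsame : (T - S₁) x = (T - S₂) x := by
    refine eq_of_norm_le_of_norm_add_eq (r := d * ‖x‖) ((T - S₁).le_opNorm x)
      (hd ▸ (T - S₂).le_opNorm x) ?_
    rw [← add_apply, hx, hAnorm, mul_assoc]
  have hker : (S₂ - S₁) x = 0 := by
    rw [sub_apply, sub_eq_zero]
    simpa using hsame.symm
  rcases hinj _ (V.sub_mem hS₂ hS₁) x hker with h | h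
  · exact (sub_eq_zero.1 h).symm
  · exact absurd h hx0

theorem existsUnique_forall_norm_sub_le_of_injective [FiniteDimensional 𝕜 V]
    (hV : V ≤ compactOperator (RingHom.id 𝕜) H H)
    (hinj : ∀ S ∈ V, ∀ x, S x = 0 → S = 0 ∨ x = 0) {T : H →L[𝕜] H} (hT : IsCompactOperator T) :
    ∃! S, S ∈ V ∧ ∀ S' ∈ V, ‖T - S‖ ≤ ‖T - S'‖ := by
  obtain ⟨S, hS, hmin⟩ := V.exists_forall_norm_sub_le T
  exact ⟨S, ⟨hS, hmin⟩, fun S' ⟨hS', hmin'⟩ =>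
    eq_of_forall_norm_sub_le_of_injective hV hinj hT hS' hS hmin' hmin⟩

end Chebyshev

theorem exists_orthonormal_nat (h : ¬ FiniteDimensional 𝕜 H) : ∃ e : ℕ → H, Orthonormal 𝕜 e := by
  let b := Module.Basis.ofVectorSpace 𝕜 H
  have : Infinite (Module.Basis.ofVectorSpaceIndex 𝕜 H) := by
    by_contra hfin
    rw [not_infinite_iff_finite] at hfin
    exact h (Module.Finite.of_basis b)
  exact ⟨InnerProductSpace.gramSchmidtNormed 𝕜 (b ∘ Infinite.natEmbedding _),
    InnerProductSpace.gramSchmidtNormed_orthonormal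
      (b.linearIndependent.comp _ (Infinite.natEmbedding _).injective)⟩

theorem exists_summable_norm_separating [SeparableSpace H] :
    ∃ u : ℕ → H, Summable (fun k => ‖u k‖) ∧ ∀ x, (∀ k, ⟪u k, x⟫_𝕜 = 0) → x = 0 := by
  obtain ⟨d, hd⟩ := exists_dense_seq H
  set c : ℕ → ℝ := fun k => (1 / 2) ^ k / (‖d k‖ + 1)
  refine ⟨fun k => (c k : 𝕜) • d k, ?_, fun x hx => ?_⟩
  · refine Summable.of_nonneg_of_le (fun _ => norm_nonneg _) (fun k => ?_) summable_geometric_two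
    rw [norm_smul, RCLike.norm_ofReal, abs_of_pos (by positivity)]
    calc c k * ‖d k‖ = (1 / 2) ^ k * (‖d k‖ / (‖d k‖ + 1)) := by simp only [c]; ring
      _ ≤ (1 / 2) ^ k :=
        mul_le_of_le_one_right (by positivity) ((div_le_one₀ (by positivity)).2 (by linarith))
  · have hc : ∀ k, (c k : 𝕜) ≠ 0 := fun k => RCLike.ofReal_ne_zero.2 (by positivity)
    have hdx : ∀ k, ⟪d k, x⟫_𝕜 = 0 := fun k => by
      simpa [inner_smul_left, hc k] using hx k
    have hx : ∀ y, ⟪y, x⟫_𝕜 = 0 := fun y =>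
      hd.induction_on y (isClosed_eq (continuous_id.inner continuous_const) continuous_const) hdx
    exact inner_self_eq_zero.1 (hx x)

theorem ContinuousLinearMap.isCompactOperator_smulRight {E F : Type*} [NormedAddCommGroup E]
    [NormedSpace 𝕜 E] [NormedAddCommGroup F] [NormedSpace 𝕜 F] (f : E →L[𝕜] 𝕜) (v : F) :
    IsCompactOperator (f.smulRight v) :=
  (isCompactOperator_of_locallyCompactSpace_dom f).continuous_comp
    (continuous_id.smul continuous_const)

@[simp]
theorem PowerSeries.coeff_linearCombination_X_pow {R : Type*} [CommSemiring R] (c : ℕ →₀ R)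
    (j : ℕ) : coeff j (Finsupp.linearCombination R (X ^ ·) c) = c j := by
  induction c using Finsupp.induction_linear with
  | zero => simp
  | add c₁ c₂ h₁ h₂ => simp [h₁, h₂]
  | single k a => simp [coeff_X_pow, Finsupp.single_apply, eq_comm]

section ShiftOperator

variable [CompleteSpace H]

variable (𝕜) in
noncomputable def shiftOperator (e u : ℕ → H) (j : ℕ) : H →L[𝕜] H :=
  ∑' k, (innerSL 𝕜 (u k)).smulRight (e (k + j))

variable {e u : ℕ → H}

theorem hasSum_shiftOperator (he : Orthonormal 𝕜 e) (hu : Summable fun k => ‖u k‖) (j : ℕ) :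
    HasSum (fun k => (innerSL 𝕜 (u k)).smulRight (e (k + j))) (shiftOperator 𝕜 e u j) := by
  refine (Summable.of_norm_bounded hu fun k => ?_).hasSum
  rw [ContinuousLinearMap.norm_smulRight_apply, innerSL_apply_norm, he.1, mul_one]

theorem isCompactOperator_shiftOperator (he : Orthonormal 𝕜 e) (hu : Summable fun k => ‖u k‖)
    (j : ℕ) : IsCompactOperator (shiftOperator 𝕜 e u j) :=
  isCompactOperator_of_tendsto (hasSum_shiftOperator he hu j) <| .of_forall fun _ =>
    Submodule.sum_mem (compactOperator (RingHom.id 𝕜) H H) fun k _ =>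
      (innerSL 𝕜 (u k)).isCompactOperator_smulRight _

theorem inner_shiftOperator_apply (he : Orthonormal 𝕜 e) (hu : Summable fun k => ‖u k‖)
    (i j : ℕ) (x : H) :
    ⟪e i, shiftOperator 𝕜 e u j x⟫_𝕜 = coeff i (X ^ j * mk fun k => ⟪u k, x⟫_𝕜) := by
  have h := (hasSum_shiftOperator he hu j).mapL
    ((innerSL 𝕜 (e i)).comp (ContinuousLinearMap.apply 𝕜 H x))
  simp only [ContinuousLinearMap.comp_apply, ContinuousLinearMap.apply_apply, innerSL_apply_apply,
    ContinuousLinearMap.smulRight_apply, inner_smul_right, orthonormal_iff_ite.1 he] at h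
  rw [← h.tsum_eq, coeff_X_pow_mul', coeff_mk, tsum_eq_single (i - j)]
  · split_ifs <;> grind
  · grind

theorem inner_linearCombination_shiftOperator_apply (he : Orthonormal 𝕜 e)
    (hu : Summable fun k => ‖u k‖) (c : ℕ →₀ 𝕜) (i : ℕ) (x : H) :
    ⟪e i, Finsupp.linearCombination 𝕜 (shiftOperator 𝕜 e u) c x⟫_𝕜 =
      coeff i (Finsupp.linearCombination 𝕜 (X ^ ·) c * mk fun k => ⟪u k, x⟫_𝕜) := by
  induction c using Finsupp.induction_linear with
  | zero => simp
  | add c₁ c₂ h₁ h₂ => simp [add_mul, inner_add_right, h₁, h₂]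
  | single j a => simp [inner_smul_right, inner_shiftOperator_apply he hu]

theorem linearCombination_shiftOperator_apply_eq_zero (he : Orthonormal 𝕜 e)
    (hu : Summable fun k => ‖u k‖) (hsep : ∀ x, (∀ k, ⟪u k, x⟫_𝕜 = 0) → x = 0)
    {c : ℕ →₀ 𝕜} {x : H} (h : Finsupp.linearCombination 𝕜 (shiftOperator 𝕜 e u) c x = 0) :
    c = 0 ∨ x = 0 := by
  have hprod : Finsupp.linearCombination 𝕜 (X ^ ·) c * mk (fun k => ⟪u k, x⟫_𝕜) = 0 := by
    ext i
    rw [← inner_linearCombination_shiftOperator_apply he hu, h, inner_zero_right, map_zero]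
  rcases mul_eq_zero.1 hprod with hc | hx
  · left
    ext j
    simpa using congrArg (coeff j) hc
  · right
    exact hsep x fun k => by simpa using congrArg (coeff k) hx

theorem linearIndependent_shiftOperator (he : Orthonormal 𝕜 e) (hu : Summable fun k => ‖u k‖)
    (hsep : ∀ x, (∀ k, ⟪u k, x⟫_𝕜 = 0) → x = 0) : LinearIndependent 𝕜 (shiftOperator 𝕜 e u) :=
  linearIndependent_iff.2 fun c hc =>
    (linearCombination_shiftOperator_apply_eq_zero he hu hsep (x := e 0)
      (by simp [hc])).resolve_right (he.ne_zero 0)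

theorem eq_zero_or_eq_zero_of_mem_span_shiftOperator (he : Orthonormal 𝕜 e)
    (hu : Summable fun k => ‖u k‖) (hsep : ∀ x, (∀ k, ⟪u k, x⟫_𝕜 = 0) → x = 0)
    {S : H →L[𝕜] H} (hS : S ∈ Submodule.span 𝕜 (Set.range (shiftOperator 𝕜 e u))) (x : H)
    (hSx : S x = 0) : S = 0 ∨ x = 0 := by
  obtain ⟨c, rfl⟩ := Finsupp.mem_span_range_iff_exists_finsupp.1 hS
  rw [← Finsupp.linearCombination_apply] at hSx ⊢
  exact (linearCombination_shiftOperator_apply_eq_zero he hu hsep hSx).imp_left fun hc => by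
    simp [hc]

end ShiftOperator

end

/-- (Legg–Scranton–Ward) If `H` is an infinite-dimensional separable complex Hilbert
space, then for every `n` there is an `n`-dimensional Chebyshev subspace of the space
`K(H)` of compact operators on `H`. -/
theorem exists_finite_dim_chebyshev_in_compacts_of_separable
    {H : Type*} [NormedAddCommGroup H] [InnerProductSpace ℂ H] [CompleteSpace H]
    [SeparableSpace H] (hH : ¬ FiniteDimensional ℂ H) (n : ℕ) :
    ∃ V : Submodule ℂ (H →L[ℂ] H),
      (V : Set (H →L[ℂ] H)) ⊆ {T : H →L[ℂ] H | IsCompactOperator T} ∧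
      Module.finrank ℂ V = n ∧
      ∀ T : H →L[ℂ] H, IsCompactOperator T →
        ∃! S : H →L[ℂ] H, S ∈ V ∧ ∀ S' ∈ V, ‖T - S‖ ≤ ‖T - S'‖ := by
  obtain ⟨e, he⟩ := exists_orthonormal_nat hH
  obtain ⟨u, hu, hsep⟩ := exists_summable_norm_separating (𝕜 := ℂ) (H := H)
  let V := Submodule.span ℂ (Set.range (shiftOperator ℂ e u ∘ Fin.val (n := n)))
  have hVspan : V ≤ Submodule.span ℂ (Set.range (shiftOperator ℂ e u)) :=
    Submodule.span_mono (Set.range_comp_subset_range _ _)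
  have hVcompact : V ≤ compactOperator (RingHom.id ℂ) H H :=
    Submodule.span_le.2 (Set.range_subset_iff.2 fun j => isCompactOperator_shiftOperator he hu j)
  have : FiniteDimensional ℂ V := FiniteDimensional.span_of_finite ℂ (Set.finite_range _)
  refine ⟨V, fun S hS => hVcompact hS, ?_, fun T hT =>
    existsUnique_forall_norm_sub_le_of_injective hVcompact
      (fun S hS => eq_zero_or_eq_zero_of_mem_span_shiftOperator he hu hsep (hVspan hS)) hT⟩
  rw [finrank_span_eq_card ((linearIndependent_shiftOperator he hu hsep).comp _ Fin.val_injective),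
    Fintype.card_fin]
end
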